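/- arXiv:2502.10568 — 4 statements merged into one kernel-verified Lean document; each statement's English description precedes it below -/
import Mathlib

section
/- In a stochastic shortest path MDP where every per-step reward in non-terminal states is bounded above by R_max < 0, any policy that from some state reaches the set of terminal states with probability p < 1 has expected total (undiscounted) reward equal to −∞ from that state. -/
open Finset Filter

/-- In an SSP where every per-step reward in non-terminal states
is bounded above by `Rmax < 0`, any (stationary stochastic) policy that from
state `s0` reaches the terminal set with probability `p < 1` has expected
total undiscounted reward diverging to `−∞` (the partial sums of expected
rewards tend to `−∞`).  Here `d t` is the state distribution at time `t`
under the policy `π`. -/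
theorem improper_policy_value_diverges {S A : Type} [Fintype S] [Fintype A]
    [DecidableEq S]
    (Sf : Finset S) (T : S → A → S → ℝ) (R : S → A → S → ℝ) (π : S → A → ℝ)
    (Rmax : ℝ) (hRmax : Rmax < 0)
    (hT0 : ∀ s a s', 0 ≤ T s a s') (hT1 : ∀ s a, ∑ s', T s a s' = 1)
    (hπ0 : ∀ s a, 0 ≤ π s a) (hπ1 : ∀ s, ∑ a, π s a = 1)
    (habs : ∀ s ∈ Sf, ∀ a, T s a s = 1)
    (hRterm : ∀ s ∈ Sf, ∀ a s', R s a s' = 0)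
    (hRle : ∀ s ∉ Sf, ∀ a s', R s a s' ≤ Rmax)
    (s0 : S) (d : ℕ → S → ℝ)
    (hd0 : d 0 = fun s => if s = s0 then 1 else 0)
    (hd : ∀ t s', d (t + 1) s' = ∑ s, ∑ a, d t s * π s a * T s a s')
    (p : ℝ) (hp : p < 1)
    (hreach : Tendsto (fun t => ∑ s ∈ Sf, d t s) atTop (nhds p)) :
    Tendsto
      (fun n => ∑ t ∈ Finset.range n, ∑ s, ∑ a, ∑ s',
        d t s * π s a * T s a s' * R s a s')
      atTop atBot := by
  -- nonnegativity of d
  have hd_nonneg : ∀ t s, 0 ≤ d t s := by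
    intro t
    induction t with
    | zero =>
      intro s; rw [hd0]; dsimp only; split <;> norm_num
    | succ t ih =>
      intro s'
      rw [hd]
      refine Finset.sum_nonneg fun s _ => Finset.sum_nonneg fun a _ => ?_
      have := ih s
      have h1 := hπ0 s a
      have h2 := hT0 s a s'
      positivity
  -- total mass is 1
  have hd_sum : ∀ t, ∑ s, d t s = 1 := by
    intro t
    induction t with
    | zero => rw [hd0]; simp
    | succ t ih =>
      have : ∑ s', d (t + 1) s' = ∑ s, ∑ a, ∑ s', d t s * π s a * T s a s' := by
        simp_rw [hd]
        rw [Finset.sum_comm]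
        congr 1; ext s
        rw [Finset.sum_comm]
      rw [this]
      calc ∑ s, ∑ a, ∑ s', d t s * π s a * T s a s'
          = ∑ s, ∑ a, d t s * π s a := by
            congr 1; ext s; congr 1; ext a
            rw [← Finset.mul_sum, hT1, mul_one]
        _ = ∑ s, d t s := by
            congr 1; ext s
            rw [← Finset.mul_sum, hπ1, mul_one]
        _ = 1 := ih
  set f : ℕ → ℝ := fun t => ∑ s, ∑ a, ∑ s',
      d t s * π s a * T s a s' * R s a s' with hf
  -- key per-step bound
  have hf_le : ∀ t, f t ≤ Rmax * (1 - ∑ s ∈ Sf, d t s) := by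
    intro t
    have hsplit : f t = ∑ s ∈ Sf, (∑ a, ∑ s', d t s * π s a * T s a s' * R s a s')
        + ∑ s ∈ Sfᶜ, (∑ a, ∑ s', d t s * π s a * T s a s' * R s a s') :=
      (Finset.sum_add_sum_compl Sf _).symm
    have hterm : ∑ s ∈ Sf, (∑ a, ∑ s', d t s * π s a * T s a s' * R s a s') = 0 := by
      refine Finset.sum_eq_zero fun s hs => ?_
      refine Finset.sum_eq_zero fun a _ => Finset.sum_eq_zero fun s' _ => ?_
      rw [hRterm s hs a s', mul_zero]
    have hrest : ∑ s ∈ Sfᶜ, (∑ a, ∑ s', d t s * π s a * T s a s' * R s a s')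
        ≤ ∑ s ∈ Sfᶜ, d t s * Rmax := by
      refine Finset.sum_le_sum fun s hs => ?_
      have hsn : s ∉ Sf := Finset.mem_compl.mp hs
      calc ∑ a, ∑ s', d t s * π s a * T s a s' * R s a s'
          ≤ ∑ a, ∑ s', d t s * π s a * T s a s' * Rmax := by
            refine Finset.sum_le_sum fun a _ => Finset.sum_le_sum fun s' _ => ?_
            have hc : 0 ≤ d t s * π s a * T s a s' := by
              have := hd_nonneg t s
              have h1 := hπ0 s a
              have h2 := hT0 s a s'
              positivity
            exact mul_le_mul_of_nonneg_left (hRle s hsn a s') hc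
        _ = ∑ a, d t s * π s a * Rmax := by
            congr 1; ext a
            simp_rw [show ∀ s', d t s * π s a * T s a s' * Rmax
              = (d t s * π s a * Rmax) * T s a s' from fun s' => by ring,
              ← Finset.mul_sum, hT1, mul_one]
        _ = d t s * Rmax := by
            simp_rw [show ∀ a, d t s * π s a * Rmax = (d t s * Rmax) * π s a from fun a => by ring,
              ← Finset.mul_sum, hπ1, mul_one]
    have hmass : ∑ s ∈ Sfᶜ, d t s * Rmax = Rmax * (1 - ∑ s ∈ Sf, d t s) := by
      rw [← Finset.sum_mul]
      have : ∑ s ∈ Sfᶜ, d t s = 1 - ∑ s ∈ Sf, d t s := by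
        have := Finset.sum_add_sum_compl Sf (d t)
        rw [hd_sum t] at this
        linarith [this]
      rw [this]; ring
    calc f t = 0 + ∑ s ∈ Sfᶜ, (∑ a, ∑ s', d t s * π s a * T s a s' * R s a s') := by
          rw [hsplit, hterm]
      _ ≤ 0 + ∑ s ∈ Sfᶜ, d t s * Rmax := by linarith [hrest]
      _ = Rmax * (1 - ∑ s ∈ Sf, d t s) := by rw [zero_add, hmass]
  -- eventually f t ≤ c < 0
  set c : ℝ := Rmax * ((1 - p) / 2) with hc
  have hc_neg : c < 0 := by
    apply mul_neg_of_neg_of_pos hRmax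
    linarith
  have hev : ∀ᶠ t in atTop, f t ≤ c := by
    have h1 : ∀ᶠ t in atTop, ∑ s ∈ Sf, d t s < p + (1 - p) / 2 := by
      have := hreach.eventually_lt_const (show p < p + (1 - p) / 2 by linarith)
      exact this
    filter_upwards [h1] with t ht
    have h2 : (1 - p) / 2 ≤ 1 - ∑ s ∈ Sf, d t s := by linarith
    have h3 : Rmax * (1 - ∑ s ∈ Sf, d t s) ≤ Rmax * ((1 - p) / 2) :=
      mul_le_mul_of_nonpos_left h2 (le_of_lt hRmax)
    exact le_trans (hf_le t) h3
  obtain ⟨N, hN⟩ := eventually_atTop.mp hev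
  -- compare partial sums with a linear function going to -∞
  have hbound : ∀ n ≥ N, ∑ t ∈ Finset.range n, f t
      ≤ (∑ t ∈ Finset.range N, f t) + ((n : ℝ) - N) * c := by
    intro n hn
    rw [← Finset.sum_range_add_sum_Ico f hn]
    have : ∑ t ∈ Finset.Ico N n, f t ≤ ∑ t ∈ Finset.Ico N n, c :=
      Finset.sum_le_sum fun t ht => hN t (Finset.mem_Ico.mp ht).1
    rw [Finset.sum_const, Nat.card_Ico, nsmul_eq_mul] at this
    have hcast : ((n - N : ℕ) : ℝ) = (n : ℝ) - N := by
      rw [Nat.cast_sub hn]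
    rw [hcast] at this
    linarith
  have hlin : Tendsto (fun n : ℕ => (∑ t ∈ Finset.range N, f t) + ((n : ℝ) - N) * c)
      atTop atBot := by
    apply tendsto_atBot_add_const_left
    have h1 : Tendsto (fun n : ℕ => (n : ℝ) - N) atTop atTop :=
      tendsto_atTop_add_const_right _ _ tendsto_natCast_atTop_atTop
    exact h1.atTop_mul_const_of_neg hc_neg
  refine tendsto_atBot_mono' atTop ?_ hlin
  filter_upwards [eventually_ge_atTop N] with n hn
  exact hbound n hn
end

section
/- If an improper policy (one reaching terminal states with probability p < 1 from the initial state) has its value diverge to −∞ whenever every per-step reward is at most R_max < 0, then adding a bounded-below penalty does not help: for any reward function R₀ with R₀ ≤ 0 and any valid SSP reward R (all per-step rewards < 0 in non-terminal states with values of improper policies diverging), the combination R₀ + λR for λ > 0 also makes the values of improper policies diverge to −∞. -/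
open Finset Filter Topology

/-!
Off the finite terminal set `R < 0`, hence `R ≤ -c` for some `c > 0`; with `R₀ ≤ 0` the
combined reward is `≤ -λc` off `S_f` and `≤ 0` on it. Since the terminal mass tends to `p < 1`,
eventually at least `(1 - p) / 2` of the mass stays off `S_f`, so every late step contributes at
most `-λc(1 - p)/2` and the partial sums of the value decrease at least linearly.
-/

theorem exists_pos_forall_le_neg_of_forall_neg {ι : Type*} [Finite ι] {f : ι → ℝ}
    (hf : ∀ i, f i < 0) : ∃ c > 0, ∀ i, f i ≤ -c := by
  have hgap : ∀ᶠ c in 𝓝[>] (0 : ℝ), ∀ i, f i ≤ -c := eventually_all.2 fun i =>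
    ((eventually_lt_nhds (neg_pos.2 (hf i))).filter_mono nhdsWithin_le_nhds).mono
      fun c hc => by linarith
  obtain ⟨c, hc, hc0⟩ := (hgap.and self_mem_nhdsWithin).exists
  exact ⟨c, hc0, hc⟩

theorem tendsto_sum_range_atBot_of_eventually_le_neg {f : ℕ → ℝ} {ε : ℝ} (hε : 0 < ε)
    (hf : ∀ᶠ n in atTop, f n ≤ -ε) :
    Tendsto (fun n => ∑ i ∈ range n, f i) atTop atBot := by
  obtain ⟨N, hN⟩ := eventually_atTop.1 hf
  rw [← tendsto_add_atTop_iff_nat N]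
  have hbound : ∀ k, ∑ i ∈ range (k + N), f i ≤ ∑ i ∈ range N, f i + -(ε * k) := by
    intro k
    rw [add_comm k, sum_range_add]
    gcongr
    calc ∑ i ∈ range k, f (N + i) ≤ ∑ _i ∈ range k, -ε :=
          sum_le_sum fun i _ => hN _ (Nat.le_add_right N i)
      _ = -(ε * k) := by simp [mul_comm]
  refine tendsto_atBot_mono hbound (tendsto_atBot_add_const_left _ _ ?_)
  exact tendsto_neg_atTop_atBot.comp
    ((tendsto_natCast_atTop_atTop (R := ℝ)).const_mul_atTop hε)

section StateDistribution

variable {S A : Type*} [Fintype S] [Fintype A] {T : S → A → S → ℝ} {π : S → A → ℝ}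

theorem sum_policy_transition_mul (hT1 : ∀ s a, ∑ s', T s a s' = 1)
    (hπ1 : ∀ s, ∑ a, π s a = 1) (x f : S → ℝ) :
    ∑ s, ∑ a, ∑ s', x s * π s a * T s a s' * f s = ∑ s, x s * f s := by
  refine sum_congr rfl fun s _ => ?_
  have hstep : ∀ a, ∑ s', x s * π s a * T s a s' * f s = x s * f s * π s a := fun a => by
    rw [← sum_mul, ← mul_sum, hT1]; ring
  rw [sum_congr rfl fun a _ => hstep a, ← mul_sum, hπ1, mul_one]

theorem state_dist_nonneg (hT0 : ∀ s a s', 0 ≤ T s a s') (hπ0 : ∀ s a, 0 ≤ π s a)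
    {d : ℕ → S → ℝ} (hd0 : ∀ s, 0 ≤ d 0 s)
    (hd : ∀ t s', d (t + 1) s' = ∑ s, ∑ a, d t s * π s a * T s a s') (t : ℕ) (s : S) :
    0 ≤ d t s := by
  induction t generalizing s with
  | zero => exact hd0 s
  | succ t ih =>
    rw [hd]
    exact sum_nonneg fun s _ => sum_nonneg fun a _ =>
      mul_nonneg (mul_nonneg (ih s) (hπ0 s a)) (hT0 s a _)

theorem sum_state_dist_eq_one (hT1 : ∀ s a, ∑ s', T s a s' = 1) (hπ1 : ∀ s, ∑ a, π s a = 1)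
    {d : ℕ → S → ℝ} (hd0 : ∑ s, d 0 s = 1)
    (hd : ∀ t s', d (t + 1) s' = ∑ s, ∑ a, d t s * π s a * T s a s') (t : ℕ) :
    ∑ s, d t s = 1 := by
  induction t with
  | zero => exact hd0
  | succ t ih =>
    calc ∑ s', d (t + 1) s' = ∑ s, ∑ a, ∑ s', d t s * π s a * T s a s' * 1 := by
          simp_rw [hd, mul_one]
          rw [sum_comm]
          exact sum_congr rfl fun s _ => sum_comm
      _ = 1 := by rw [sum_policy_transition_mul hT1 hπ1]; simpa using ih

theorem expected_step_reward_le [DecidableEq S] (hT0 : ∀ s a s', 0 ≤ T s a s')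
    (hT1 : ∀ s a, ∑ s', T s a s' = 1) (hπ0 : ∀ s a, 0 ≤ π s a) (hπ1 : ∀ s, ∑ a, π s a = 1)
    (Sf : Finset S) {x : S → ℝ} (hx : ∀ s, 0 ≤ x s) {r : S → A → S → ℝ} {κ : ℝ}
    (hr_term : ∀ s ∈ Sf, ∀ a s', r s a s' ≤ 0) (hr : ∀ s ∉ Sf, ∀ a s', r s a s' ≤ -κ) :
    ∑ s, ∑ a, ∑ s', x s * π s a * T s a s' * r s a s' ≤ -κ * ∑ s ∈ Sfᶜ, x s := by
  calc ∑ s, ∑ a, ∑ s', x s * π s a * T s a s' * r s a s'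
      ≤ ∑ s, ∑ a, ∑ s', x s * π s a * T s a s' * (if s ∈ Sf then 0 else -κ) := by
        gcongr with s _ a _ s' _
        · exact mul_nonneg (mul_nonneg (hx s) (hπ0 s a)) (hT0 s a s')
        · split_ifs with hs
          exacts [hr_term s hs a s', hr s hs a s']
    _ = ∑ s, x s * (if s ∈ Sf then 0 else -κ) := sum_policy_transition_mul hT1 hπ1 _ _
    _ = -κ * ∑ s ∈ Sfᶜ, x s := by
        rw [← sum_compl_add_sum Sf, sum_eq_zero fun s (hs : s ∈ Sf) => by rw [if_pos hs, mul_zero],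
          add_zero, mul_sum]
        exact sum_congr rfl fun s hs => by rw [if_neg (mem_compl.1 hs), mul_comm]

theorem tendsto_value_atBot_of_improper [DecidableEq S] (hT0 : ∀ s a s', 0 ≤ T s a s')
    (hT1 : ∀ s a, ∑ s', T s a s' = 1) (hπ0 : ∀ s a, 0 ≤ π s a) (hπ1 : ∀ s, ∑ a, π s a = 1)
    (Sf : Finset S) {d : ℕ → S → ℝ} (hd0 : ∀ s, 0 ≤ d 0 s) (hd0_sum : ∑ s, d 0 s = 1)
    (hd : ∀ t s', d (t + 1) s' = ∑ s, ∑ a, d t s * π s a * T s a s')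
    {p : ℝ} (hp : p < 1) (hreach : Tendsto (fun t => ∑ s ∈ Sf, d t s) atTop (𝓝 p))
    {r : S → A → S → ℝ} {κ : ℝ} (hκ : 0 < κ)
    (hr_term : ∀ s ∈ Sf, ∀ a s', r s a s' ≤ 0) (hr : ∀ s ∉ Sf, ∀ a s', r s a s' ≤ -κ) :
    Tendsto (fun n => ∑ t ∈ range n, ∑ s, ∑ a, ∑ s', d t s * π s a * T s a s' * r s a s')
      atTop atBot := by
  have hgap : 0 < κ * ((1 - p) / 2) := mul_pos hκ (by linarith)
  refine tendsto_sum_range_atBot_of_eventually_le_neg hgap ?_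
  filter_upwards [hreach.eventually_lt_const (show p < (1 + p) / 2 by linarith)] with t ht
  have hmass : ∑ s ∈ Sfᶜ, d t s = 1 - ∑ s ∈ Sf, d t s := by
    rw [← sum_state_dist_eq_one hT1 hπ1 hd0_sum hd t, ← sum_compl_add_sum Sf]
    ring
  calc _ ≤ -κ * ∑ s ∈ Sfᶜ, d t s :=
        expected_step_reward_le hT0 hT1 hπ0 hπ1 Sf (state_dist_nonneg hT0 hπ0 hd0 hd t) hr_term hr
    _ ≤ -(κ * ((1 - p) / 2)) := by rw [hmass]; nlinarith

end StateDistribution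

theorem combined_reward_improper_diverges_general {S A : Type} [Fintype S] [Fintype A]
    [DecidableEq S]
    (Sf : Finset S) (T : S → A → S → ℝ)
    (R₀ R : S → A → S → ℝ) (lam : ℝ) (hlam : 0 < lam)
    (π : S → A → ℝ)
    (hT0 : ∀ s a s', 0 ≤ T s a s') (hT1 : ∀ s a, ∑ s', T s a s' = 1)
    (hπ0 : ∀ s a, 0 ≤ π s a) (hπ1 : ∀ s, ∑ a, π s a = 1)
    (hR₀nonpos : ∀ s a s', R₀ s a s' ≤ 0)
    (hRterm : ∀ s ∈ Sf, ∀ a s', R s a s' = 0)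
    (hRneg : ∀ s ∉ Sf, ∀ a s', R s a s' < 0)
    (s0 : S) (d : ℕ → S → ℝ)
    (hd0 : d 0 = fun s => if s = s0 then 1 else 0)
    (hd : ∀ t s', d (t + 1) s' = ∑ s, ∑ a, d t s * π s a * T s a s')
    (p : ℝ) (hp : p < 1)
    (hreach : Tendsto (fun t => ∑ s ∈ Sf, d t s) atTop (nhds p)) :
    Tendsto
      (fun n => ∑ t ∈ Finset.range n, ∑ s, ∑ a, ∑ s',
        d t s * π s a * T s a s' * (R₀ s a s' + lam * R s a s'))
      atTop atBot := by
  obtain ⟨c, hc, hRc⟩ := exists_pos_forall_le_neg_of_forall_neg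
    (f := fun x : {s // s ∉ Sf} × A × S => R x.1 x.2.1 x.2.2) fun x => hRneg x.1 x.1.2 _ _
  refine tendsto_value_atBot_of_improper hT0 hT1 hπ0 hπ1 Sf
    (fun s => by simp only [hd0]; positivity) (by simp [hd0]) hd hp hreach
    (mul_pos hlam hc) (fun s hs a s' => ?_) (fun s hs a s' => ?_)
  · rw [hRterm s hs a s', mul_zero, add_zero]
    exact hR₀nonpos s a s'
  · linarith [hR₀nonpos s a s', mul_le_mul_of_nonneg_left (hRc ⟨⟨s, hs⟩, a, s'⟩) hlam.le]

/-- If a reward `R` makes a valid SSP (per-step rewards `< 0` in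
non-terminal states, so values of improper policies diverge), then for any
nonpositive reward `R₀` and any `λ > 0`, the combination `R₀ + λ·R` also makes
the value of any improper policy (one reaching the terminal set with
probability `p < 1`) diverge to `−∞`. -/
theorem combined_reward_improper_diverges {S A : Type} [Fintype S] [Fintype A]
    [DecidableEq S]
    (Sf : Finset S) (T : S → A → S → ℝ)
    (R₀ R : S → A → S → ℝ) (lam : ℝ) (hlam : 0 < lam)
    (π : S → A → ℝ)
    (hT0 : ∀ s a s', 0 ≤ T s a s') (hT1 : ∀ s a, ∑ s', T s a s' = 1)
    (hπ0 : ∀ s a, 0 ≤ π s a) (hπ1 : ∀ s, ∑ a, π s a = 1)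
    (habs : ∀ s ∈ Sf, ∀ a, T s a s = 1)
    (hR₀nonpos : ∀ s a s', R₀ s a s' ≤ 0)
    (hR₀term : ∀ s ∈ Sf, ∀ a s', R₀ s a s' = 0)
    (hRterm : ∀ s ∈ Sf, ∀ a s', R s a s' = 0)
    (hRneg : ∀ s ∉ Sf, ∀ a s', R s a s' < 0)
    (s0 : S) (d : ℕ → S → ℝ)
    (hd0 : d 0 = fun s => if s = s0 then 1 else 0)
    (hd : ∀ t s', d (t + 1) s' = ∑ s, ∑ a, d t s * π s a * T s a s')
    (p : ℝ) (hp : p < 1)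
    (hreach : Tendsto (fun t => ∑ s ∈ Sf, d t s) atTop (nhds p)) :
    Tendsto
      (fun n => ∑ t ∈ Finset.range n, ∑ s, ∑ a, ∑ s',
        d t s * π s a * T s a s' * (R₀ s a s' + lam * R s a s'))
      atTop atBot :=
  combined_reward_improper_diverges_general Sf T R₀ R lam hlam π hT0 hT1 hπ0 hπ1 hR₀nonpos hRterm
    hRneg s0 d hd0 hd p hp hreach
end

section
/- For a discounted MDP with discount γ ∈ [0,1) and reward R = R_s + R_b where R_b ≥ R_b^min pointwise, for any policy π (depending only on the S-component), the value of π in the full problem satisfies V^π(s,b) ≥ V_s^π(s) + R_b^min · V_cost^π(s), where V_s^π evaluates π with reward R_s and V_cost^π evaluates π with reward 1[s' ∉ S_f] (so V_cost^π(s) is the expected discounted time before absorption), assuming R_b^min ≤ 0 and R_b vanishes on terminal transitions. -/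
open Finset
open scoped Classical

/-- For a discounted MDP over `I = S × B` (modeled by a
projection `proj : I → S` with `S`-marginal Markov dynamics) with reward
`R = R_s + R_b`, `R_b^min ≤ R_b ≤ 0` on non-terminal transitions and
`R_b = 0` on terminal transitions, any stationary policy `π` on `S`
satisfies `V^π(i) ≥ V_s^π(proj i) + R_b^min · V_cost^π(proj i)`, where
`V_s^π` evaluates `π` with `R_s` and `V_cost^π` evaluates `π` with reward
`1[s' ∉ S_f]`. -/
theorem lower_bound_decomposed_reward {S A I : Type} [Fintype S] [Fintype A]
    [DecidableEq S]
    (proj : I → S) (Sf : Finset S)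
    (P : I → A → I → ℝ) (supp : I → A → Finset I)
    (hP0 : ∀ i a i', 0 ≤ P i a i')
    (hPsupp : ∀ i a i', i' ∉ supp i a → P i a i' = 0)
    (hP1 : ∀ i a, ∑ i' ∈ supp i a, P i a i' = 1)
    (Ts : S → A → S → ℝ)
    (hmarg : ∀ i a s',
      (∑ i' ∈ (supp i a).filter (fun i' => proj i' = s'), P i a i')
        = Ts (proj i) a s')
    (habs : ∀ s ∈ Sf, ∀ a, Ts s a s = 1)
    (Rs : S → A → S → ℝ) (Rb : I → A → I → ℝ) (Rbmin : ℝ)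
    (hRbmin : Rbmin ≤ 0)
    (hRslo : ∀ i a i', Rbmin ≤ Rb i a i') (hRbhi : ∀ i a i', Rb i a i' ≤ 0)
    (hRsterm : ∀ s ∈ Sf, ∀ a s', Rs s a s' = 0)
    (hRbterm : ∀ i a i', proj i ∈ Sf ∨ proj i' ∈ Sf → Rb i a i' = 0)
    (γ : ℝ) (hγ0 : 0 ≤ γ) (hγ1 : γ < 1)
    (π : S → A)
    (Vπ : I → ℝ) (Vsπ : S → ℝ) (Vcost : S → ℝ)
    (hVπbdd : ∃ M, ∀ i, |Vπ i| ≤ M)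
    (hVsπbdd : ∃ M, ∀ s, |Vsπ s| ≤ M)
    (hVcostbdd : ∃ M, ∀ s, |Vcost s| ≤ M)
    (hVπ : ∀ i, Vπ i = ∑ i' ∈ supp i (π (proj i)),
      P i (π (proj i)) i' *
        (Rs (proj i) (π (proj i)) (proj i') + Rb i (π (proj i)) i' + γ * Vπ i'))
    (hVsπ : ∀ s, Vsπ s = ∑ s', Ts s (π s) s' * (Rs s (π s) s' + γ * Vsπ s'))
    (hVcost : ∀ s, Vcost s = ∑ s',
      Ts s (π s) s' * ((if s' ∉ Sf then (1:ℝ) else 0) + γ * Vcost s')) :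
    ∀ i, Vsπ (proj i) + Rbmin * Vcost (proj i) ≤ Vπ i := by
  classical
  set D : I → ℝ := fun i => Vsπ (proj i) + Rbmin * Vcost (proj i) - Vπ i with hD
  suffices h : ∀ i, D i ≤ 0 by
    intro i; have := h i; simp only [hD] at this; linarith
  intro i0
  have hne : (Set.range D).Nonempty := ⟨D i0, ⟨i0, rfl⟩⟩
  obtain ⟨M1, hM1⟩ := hVπbdd
  obtain ⟨M2, hM2⟩ := hVsπbdd
  obtain ⟨M3, hM3⟩ := hVcostbdd
  have hbdd : BddAbove (Set.range D) := by
    refine ⟨M2 + |Rbmin| * M3 + M1, ?_⟩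
    rintro _ ⟨i, rfl⟩
    have h1 := hM1 i
    have h2 := hM2 (proj i)
    have h3 := hM3 (proj i)
    have h4 : |Rbmin * Vcost (proj i)| ≤ |Rbmin| * M3 := by
      rw [abs_mul]
      exact mul_le_mul_of_nonneg_left (hM3 _) (abs_nonneg _)
    have h2' := (abs_le.mp h2).2
    have h1' := (abs_le.mp h1).1
    have h4' := (abs_le.mp h4).2
    simp only [hD]
    linarith
  set K := sSup (Set.range D) with hK
  have key : ∀ i, D i ≤ γ * K := by
    intro i
    have transfer : ∀ f : S → ℝ, (∑ s', Ts (proj i) (π (proj i)) s' * f s')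
        = ∑ i' ∈ supp i (π (proj i)), P i (π (proj i)) i' * f (proj i') := by
      intro f
      rw [← Finset.sum_fiberwise (supp i (π (proj i))) (fun i' => proj i')
        (fun i' => P i (π (proj i)) i' * f (proj i'))]
      refine Finset.sum_congr rfl fun s' _ => ?_
      rw [← hmarg i (π (proj i)) s', Finset.sum_mul]
      refine Finset.sum_congr rfl fun i' hi' => ?_
      rw [(Finset.mem_filter.mp hi').2]
    have expand : Vsπ (proj i) + Rbmin * Vcost (proj i)
        = ∑ i' ∈ supp i (π (proj i)), P i (π (proj i)) i' *
            (Rs (proj i) (π (proj i)) (proj i')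
              + Rbmin * (if proj i' ∉ Sf then (1:ℝ) else 0)
              + γ * (Vsπ (proj i') + Rbmin * Vcost (proj i'))) := by
      calc Vsπ (proj i) + Rbmin * Vcost (proj i)
          = ∑ s', Ts (proj i) (π (proj i)) s' *
              (Rs (proj i) (π (proj i)) s'
                + Rbmin * (if s' ∉ Sf then (1:ℝ) else 0)
                + γ * (Vsπ s' + Rbmin * Vcost s')) := by
            rw [hVsπ (proj i), hVcost (proj i), Finset.mul_sum,
              ← Finset.sum_add_distrib]
            refine Finset.sum_congr rfl fun s' _ => ?_
            ring
        _ = _ := transfer _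
    have hDi : D i = ∑ i' ∈ supp i (π (proj i)), P i (π (proj i)) i' *
        (Rbmin * (if proj i' ∉ Sf then (1:ℝ) else 0) - Rb i (π (proj i)) i'
          + γ * D i') := by
      simp only [hD]
      rw [expand, hVπ i, ← Finset.sum_sub_distrib]
      refine Finset.sum_congr rfl fun i' _ => ?_
      ring
    rw [hDi]
    calc ∑ i' ∈ supp i (π (proj i)), P i (π (proj i)) i' *
        (Rbmin * (if proj i' ∉ Sf then (1:ℝ) else 0) - Rb i (π (proj i)) i'
          + γ * D i')
        ≤ ∑ i' ∈ supp i (π (proj i)), P i (π (proj i)) i' * (γ * K) := by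
          refine Finset.sum_le_sum fun i' _ => ?_
          refine mul_le_mul_of_nonneg_left ?_ (hP0 _ _ _)
          have hDK : D i' ≤ K := le_csSup hbdd ⟨i', rfl⟩
          have hγDK : γ * D i' ≤ γ * K := mul_le_mul_of_nonneg_left hDK hγ0
          by_cases hs : proj i' ∉ Sf
          · rw [if_pos hs]
            have := hRslo i (π (proj i)) i'
            linarith
          · rw [if_neg hs]
            have := hRbterm i (π (proj i)) i' (Or.inr (not_not.mp hs))
            rw [this]
            linarith
      _ = γ * K := by rw [← Finset.sum_mul, hP1, one_mul]
  have hKle : K ≤ γ * K := csSup_le hne (by rintro _ ⟨i, rfl⟩; exact key i)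
  have hK0 : K ≤ 0 := by nlinarith
  exact le_trans (le_csSup hbdd ⟨i0, rfl⟩) hK0
end

section
/- In the OAMDP-to-PO-OAMDP reduction where states are pairs (s,θ), transitions preserve the type component (T'((s,θ),a,(s',θ')) = 1[θ = θ']·T^θ(s,a,s')), and observations reveal exactly the S-component (O(a,(s',θ'), o) = 1[o = s']), the Bayesian state-belief update preserves the type-marginal structure: if the initial belief is supported on {(s₀, θ) : θ ∈ Θ}, then every posterior belief after any observation history is supported on pairs whose S-component equals the last observation, and its Θ-marginal equals the BST Bayesian type posterior computed from the state-action-observation likelihoods of the per-type MDPs. -/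
open Finset

/-- One-step likelihood of moving from `s` to `s'` under type `θ`:
`L^θ(s,s') = Σ_a π^θ(a|s)·T^θ(s'|s,a)`. -/
noncomputable def lik {S A Θ : Type} [Fintype A]
    (π : Θ → S → A → ℝ) (T : Θ → S → A → S → ℝ) (θ : Θ) (s s' : S) : ℝ :=
  ∑ a, π θ s a * T θ s a s'

/-- Unnormalized Bayesian filtering update of a belief `b` over `S × Θ` upon
observing the next `S`-component `sNew`, for the type-preserving dynamics and
the deterministic observation revealing exactly the `S`-component. -/
noncomputable def Kf {S A Θ : Type} [Fintype S] [Fintype A] [DecidableEq S]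
    (π : Θ → S → A → ℝ) (T : Θ → S → A → S → ℝ)
    (b : S × Θ → ℝ) (sNew : S) : S × Θ → ℝ :=
  fun x => (if x.1 = sNew then (1:ℝ) else 0) * ∑ s, lik π T x.2 s sNew * b (s, x.2)

/-- The sequence of posterior beliefs over `S × Θ` along the observed state
trajectory `traj`, starting from the initial belief
`b₀(s,θ) = 1[s = s₀]·p₀(θ)`. -/
noncomputable def bel {S A Θ : Type} [Fintype S] [Fintype A] [Fintype Θ]
    [DecidableEq S]
    (π : Θ → S → A → ℝ) (T : Θ → S → A → S → ℝ)
    (p0 : Θ → ℝ) (s0 : S) (traj : ℕ → S) : ℕ → S × Θ → ℝ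
  | 0 => fun x => if x.1 = s0 then p0 x.2 else 0
  | t + 1 => fun x =>
      Kf π T (bel π T p0 s0 traj t) (traj (t + 1)) x /
        ∑ y, Kf π T (bel π T p0 s0 traj t) (traj (t + 1)) y

/-- In the OAMDP-to-PO-OAMDP reduction (states `(s,θ)`,
type-preserving transitions, observations revealing exactly the
`S`-component), the Bayesian state-belief update preserves the type-marginal
structure: every posterior belief is supported on pairs whose `S`-component
equals the last observation, and its `Θ`-marginal equals the BST Bayesian
type posterior `p_t(θ) ∝ p₀(θ)·Π_k Σ_a π^θ(a|s_k) T^θ(s_{k+1}|s_k,a)`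
computed along the observed state trajectory. -/
theorem oamdp_reduction_belief_structure {S A Θ : Type}
    [Fintype S] [Fintype A] [Fintype Θ] [DecidableEq S]
    (π : Θ → S → A → ℝ) (T : Θ → S → A → S → ℝ)
    (p0 : Θ → ℝ) (s0 : S) (traj : ℕ → S)
    (htraj0 : traj 0 = s0)
    (hp0 : ∀ θ, 0 ≤ p0 θ) (hp1 : ∑ θ, p0 θ = 1)
    (hπ0 : ∀ θ s a, 0 ≤ π θ s a) (hπ1 : ∀ θ s, ∑ a, π θ s a = 1)
    (hT0 : ∀ θ s a s', 0 ≤ T θ s a s') (hT1 : ∀ θ s a, ∑ s', T θ s a s' = 1)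
    (hZ : ∀ t, 0 < ∑ y, Kf π T (bel π T p0 s0 traj t) (traj (t + 1)) y) :
    (∀ t (x : S × Θ), x.1 ≠ traj t → bel π T p0 s0 traj t x = 0) ∧
    (∀ t θ, (∑ s, bel π T p0 s0 traj t (s, θ)) =
      (p0 θ * ∏ k ∈ Finset.range t, lik π T θ (traj k) (traj (k + 1))) /
        ∑ θ', p0 θ' * ∏ k ∈ Finset.range t, lik π T θ' (traj k) (traj (k + 1))) := by
  set W : ℕ → Θ → ℝ := fun t θ =>
    p0 θ * ∏ k ∈ Finset.range t, lik π T θ (traj k) (traj (k + 1)) with hW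
  have key : ∀ t, (∀ x : S × Θ,
      bel π T p0 s0 traj t x =
        if x.1 = traj t then W t x.2 / (∑ θ', W t θ') else 0) ∧
      0 < ∑ θ', W t θ' := by
    intro t
    induction t with
    | zero =>
      constructor
      · intro x
        simp [bel, hW, htraj0, hp1]
      · simp [hW, hp1]
    | succ t ih =>
      obtain ⟨hb, hZt⟩ := ih
      have hZne : (∑ θ', W t θ') ≠ 0 := ne_of_gt hZt
      have hKf : ∀ x : S × Θ,
          Kf π T (bel π T p0 s0 traj t) (traj (t + 1)) x =
            (if x.1 = traj (t + 1) then (1:ℝ) else 0) *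
              (W (t + 1) x.2 / (∑ θ', W t θ')) := by
        intro x
        unfold Kf
        congr 1
        have hsum : ∀ s : S,
            lik π T x.2 s (traj (t + 1)) * bel π T p0 s0 traj t (s, x.2) =
            if s = traj t then
              lik π T x.2 (traj t) (traj (t + 1)) * (W t x.2 / ∑ θ', W t θ')
            else 0 := by
          intro s
          rw [hb (s, x.2)]
          by_cases h : s = traj t <;> simp [h]
        rw [Finset.sum_congr rfl fun s _ => hsum s]
        rw [Finset.sum_ite_eq' Finset.univ (traj t)]
        simp only [Finset.mem_univ, if_true]
        have : W (t + 1) x.2 = W t x.2 * lik π T x.2 (traj t) (traj (t + 1)) := by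
          simp [hW, Finset.prod_range_succ, mul_assoc]
        rw [this]; ring
      have hD : (∑ y, Kf π T (bel π T p0 s0 traj t) (traj (t + 1)) y) =
          (∑ θ', W (t + 1) θ') / (∑ θ', W t θ') := by
        rw [Finset.sum_congr rfl fun y _ => hKf y, Fintype.sum_prod_type,
          Finset.sum_comm]
        have hin : ∀ θ' : Θ,
            (∑ s : S, (if ((s, θ') : S × Θ).1 = traj (t + 1) then (1:ℝ) else 0) *
              (W (t + 1) ((s, θ') : S × Θ).2 / ∑ θ'', W t θ'')) =
            W (t + 1) θ' / ∑ θ'', W t θ'' := by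
          intro θ'
          simp [ite_mul, Finset.sum_ite_eq' Finset.univ (traj (t + 1))]
        rw [Finset.sum_congr rfl fun θ' _ => hin θ', ← Finset.sum_div]
      have hZ' : 0 < ∑ θ', W (t + 1) θ' := by
        have h1 := hZ t
        rw [hD] at h1
        have := mul_pos h1 hZt
        rwa [div_mul_cancel₀ _ hZne] at this
      refine ⟨fun x => ?_, hZ'⟩
      show Kf π T (bel π T p0 s0 traj t) (traj (t + 1)) x /
          (∑ y, Kf π T (bel π T p0 s0 traj t) (traj (t + 1)) y) = _
      rw [hKf, hD]
      by_cases h : x.1 = traj (t + 1)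
      · simp only [h, if_true, one_mul]
        have hZ'ne : (∑ θ', W (t + 1) θ') ≠ 0 := ne_of_gt hZ'
        field_simp
      · simp [h]
  constructor
  · intro t x hx
    rw [(key t).1 x, if_neg hx]
  · intro t θ
    have h := fun s => ((key t).1 (s, θ))
    calc (∑ s, bel π T p0 s0 traj t (s, θ))
        = ∑ s, if s = traj t then W t θ / (∑ θ', W t θ') else 0 := by
          exact Finset.sum_congr rfl fun s _ => h s
      _ = W t θ / (∑ θ', W t θ') := by
          simp [Finset.sum_ite_eq' Finset.univ (traj t)]
      _ = _ := by simp [hW]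
end
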